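/- arXiv:1910.13516 — 2 statements merged into one kernel-verified Lean document; each statement's English description precedes it below -/
import Mathlib

section
/- Let F : ℝ^d → ℝ be differentiable with L-Lipschitz continuous gradient (L ≥ 0), let ν > 0, and let x ∈ ℝ^d. Let H be a symmetric positive-definite d×d real matrix with smallest eigenvalue λ_min > 0 and largest eigenvalue λ_max, and suppose ‖∇F(x)‖ > (λ_max · L · ν · √d) / (2 · λ_min). Let G be an integrable random vector in ℝ^d (on some probability space) that is an unbiased estimator of the finite-difference gradient, i.e. E[G] = ∇^FD F(x). Then E[(H G)ᵀ (H ∇F(x))] > 0. -/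
/-!
Unbiasedness and linearity of the integral turn the expectation into
`⟪H ∇^FD F(x), H ∇F(x)⟫`. The descent lemma `|F(x + v) - F x - ⟪∇F x, v⟫| ≤ L/2 ‖v‖²` bounds
every coordinate of the finite-difference error `e = ∇^FD F(x) - ∇F(x)` by `Lν/2`, so
`‖e‖ ≤ Lν√d/2`. Diagonalising `H` gives `‖H e‖ ≤ λ_max ‖e‖ < λ_min ‖∇F(x)‖ ≤ ‖H ∇F(x)‖`, and
`⟪u, v⟫ > 0` as soon as `‖u - v‖ < ‖v‖`.
-/

open MeasureTheory
open scoped RealInnerProductSpace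

noncomputable def fdGrad {d : ℕ} (ν : ℝ) (g : EuclideanSpace ℝ (Fin d) → ℝ)
    (x : EuclideanSpace ℝ (Fin d)) : EuclideanSpace ℝ (Fin d) :=
  (WithLp.equiv 2 (Fin d → ℝ)).symm
    fun j => (g (x + ν • EuclideanSpace.single j (1:ℝ)) - g x) / ν


noncomputable def mApp {d : ℕ} (H : Matrix (Fin d) (Fin d) ℝ) :
    EuclideanSpace ℝ (Fin d) →L[ℝ] EuclideanSpace ℝ (Fin d) :=
  Matrix.toEuclideanCLM (𝕜 := ℝ) H

section DescentLemma

variable {E : Type*} [NormedAddCommGroup E] [InnerProductSpace ℝ E] [CompleteSpace E]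
  {F : E → ℝ} {L : ℝ}

theorem abs_sub_sub_inner_gradient_le (hF : Differentiable ℝ F)
    (hLip : ∀ y z, ‖gradient F y - gradient F z‖ ≤ L * ‖y - z‖) (x v : E) :
    |F (x + v) - F x - ⟪gradient F x, v⟫| ≤ L / 2 * ‖v‖ ^ 2 := by
  set f : ℝ → ℝ := fun t => F (x + t • v) - F x - t * ⟪gradient F x, v⟫
  set f' : ℝ → ℝ := fun t => ⟪gradient F (x + t • v) - gradient F x, v⟫
  have hf : ∀ t, HasDerivAt f (f' t) t := by
    intro t
    have hline : HasDerivAt (fun t : ℝ => x + t • v) v t := by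
      simpa using ((hasDerivAt_id t).smul_const v).const_add x
    have hFline := (hF (x + t • v)).hasGradientAt.hasFDerivAt.comp_hasDerivAt t hline
    refine ((hFline.sub_const (F x)).sub
      ((hasDerivAt_id t).mul_const ⟪gradient F x, v⟫)).congr_deriv ?_
    simp [f', inner_sub_left]
  have bound : ∀ t ∈ Set.Ico (0 : ℝ) 1, ‖f' t‖ ≤ L * ‖v‖ ^ 2 * t := by
    intro t ht
    calc ‖f' t‖ ≤ ‖gradient F (x + t • v) - gradient F x‖ * ‖v‖ := norm_inner_le_norm _ _
      _ ≤ L * ‖(x + t • v) - x‖ * ‖v‖ := by gcongr; exact hLip _ _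
      _ = L * ‖v‖ ^ 2 * t := by
        rw [add_sub_cancel_left, norm_smul, Real.norm_of_nonneg ht.1]
        ring
  have hB : ∀ t : ℝ, HasDerivAt (fun t => L / 2 * ‖v‖ ^ 2 * t ^ 2) (L * ‖v‖ ^ 2 * t) t := fun t =>
    ((hasDerivAt_pow 2 t).const_mul (L / 2 * ‖v‖ ^ 2)).congr_deriv (by ring)
  have hf_one := image_norm_le_of_norm_deriv_right_le_deriv_boundary
    (fun t _ => (hf t).continuousAt.continuousWithinAt) (fun t _ => (hf t).hasDerivWithinAt)
    (by simp [f]) hB bound (Set.right_mem_Icc.2 zero_le_one)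
  simpa [f] using hf_one

end DescentLemma

theorem real_inner_pos_of_norm_sub_lt_norm {E : Type*} [NormedAddCommGroup E]
    [InnerProductSpace ℝ E] {u v : E} (h : ‖u - v‖ < ‖v‖) : 0 < ⟪u, v⟫ := by
  have := norm_sub_sq_real u v
  nlinarith [norm_nonneg (u - v), sq_nonneg ‖u‖]

theorem EuclideanSpace.norm_le_norm_of_forall_norm_le {𝕜 ι : Type*} [RCLike 𝕜] [Fintype ι]
    {v w : EuclideanSpace 𝕜 ι} (h : ∀ i, ‖v i‖ ≤ ‖w i‖) : ‖v‖ ≤ ‖w‖ := by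
  rw [EuclideanSpace.norm_eq, EuclideanSpace.norm_eq]
  gcongr with i
  exact h i

theorem EuclideanSpace.norm_le_sqrt_card_mul_of_abs_le {ι : Type*} [Fintype ι]
    {v : EuclideanSpace ℝ ι} {C : ℝ} (hC : 0 ≤ C) (h : ∀ i, |v i| ≤ C) :
    ‖v‖ ≤ √(Fintype.card ι) * C := by
  calc ‖v‖ ≤ √(∑ _i : ι, C ^ 2) := by
        rw [EuclideanSpace.norm_eq]
        gcongr with i
        exact h i
    _ = √(Fintype.card ι) * C := by
        rw [Finset.sum_const, Finset.card_univ, nsmul_eq_mul, Real.sqrt_mul (Nat.cast_nonneg _),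
          Real.sqrt_sq hC]

theorem OrthonormalBasis.repr_apply_of_apply_eq_smul {𝕜 ι E : Type*} [RCLike 𝕜] [Fintype ι]
    [NormedAddCommGroup E] [InnerProductSpace 𝕜 E] (b : OrthonormalBasis ι 𝕜 E)
    (T : E →ₗ[𝕜] E) (c : ι → 𝕜) (hT : ∀ j, T (b j) = c j • b j) (u : E) (i : ι) :
    b.repr (T u) i = c i * b.repr u i := by
  classical
  conv_lhs => rw [← b.sum_repr u]
  simp [map_sum, hT, smul_smul, OrthonormalBasis.repr_self, Pi.single_apply, mul_comm]

section FiniteDifference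

variable {d : ℕ} {F : EuclideanSpace ℝ (Fin d) → ℝ} {L ν : ℝ}

theorem fdGrad_sub_gradient_apply (hν : ν ≠ 0)
    (x : EuclideanSpace ℝ (Fin d)) (j : Fin d) :
    (fdGrad ν F x - gradient F x) j =
      (F (x + ν • EuclideanSpace.single j 1) - F x
        - ⟪gradient F x, ν • EuclideanSpace.single j 1⟫) / ν := by
  simp only [fdGrad, PiLp.sub_apply, WithLp.equiv_symm_apply, inner_smul_right,
    EuclideanSpace.inner_single_right]
  field_simp
  simp

theorem abs_fdGrad_sub_gradient_apply_le (hν : 0 < ν) (hF : Differentiable ℝ F)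
    (hLip : ∀ y z, ‖gradient F y - gradient F z‖ ≤ L * ‖y - z‖)
    (x : EuclideanSpace ℝ (Fin d)) (j : Fin d) :
    |(fdGrad ν F x - gradient F x) j| ≤ L * ν / 2 := by
  have hdescent := abs_sub_sub_inner_gradient_le hF hLip x (ν • EuclideanSpace.single j 1)
  rw [norm_smul, PiLp.norm_single, norm_one, mul_one, Real.norm_of_nonneg hν.le]
    at hdescent
  rw [fdGrad_sub_gradient_apply hν.ne', abs_div, abs_of_pos hν, div_le_iff₀ hν]
  linarith

theorem norm_fdGrad_sub_gradient_le (hL : 0 ≤ L) (hν : 0 < ν) (hF : Differentiable ℝ F)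
    (hLip : ∀ y z, ‖gradient F y - gradient F z‖ ≤ L * ‖y - z‖)
    (x : EuclideanSpace ℝ (Fin d)) :
    ‖fdGrad ν F x - gradient F x‖ ≤ L * ν * √d / 2 := by
  have := EuclideanSpace.norm_le_sqrt_card_mul_of_abs_le (by positivity)
    (abs_fdGrad_sub_gradient_apply_le hν hF hLip x)
  rw [Fintype.card_fin] at this
  linarith

end FiniteDifference

namespace Matrix.IsHermitian

variable {d : ℕ} {H : Matrix (Fin d) (Fin d) ℝ} (hH : H.IsHermitian)

theorem eigenvectorBasis_repr_mApp (u : EuclideanSpace ℝ (Fin d)) (i : Fin d) :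
    hH.eigenvectorBasis.repr (mApp H u) i = hH.eigenvalues i * hH.eigenvectorBasis.repr u i := by
  refine hH.eigenvectorBasis.repr_apply_of_apply_eq_smul (mApp H).toLinearMap _ (fun j => ?_) u i
  apply (WithLp.equiv 2 (Fin d → ℝ)).injective
  simpa [mApp, Matrix.ofLp_toEuclideanCLM] using hH.mulVec_eigenvectorBasis j

theorem norm_mApp_le {M : ℝ} (hM : 0 ≤ M) (h : ∀ i, |hH.eigenvalues i| ≤ M)
    (u : EuclideanSpace ℝ (Fin d)) : ‖mApp H u‖ ≤ M * ‖u‖ := by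
  rw [← hH.eigenvectorBasis.repr.norm_map (mApp H u), ← hH.eigenvectorBasis.repr.norm_map u,
    ← Real.norm_of_nonneg hM, ← norm_smul]
  refine EuclideanSpace.norm_le_norm_of_forall_norm_le fun i => ?_
  rw [eigenvectorBasis_repr_mApp, PiLp.smul_apply, norm_mul, norm_smul]
  gcongr
  exact (h i).trans (le_abs_self M)

theorem mul_norm_le_norm_mApp {m : ℝ} (hm : 0 ≤ m) (h : ∀ i, m ≤ |hH.eigenvalues i|)
    (u : EuclideanSpace ℝ (Fin d)) : m * ‖u‖ ≤ ‖mApp H u‖ := by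
  rw [← hH.eigenvectorBasis.repr.norm_map (mApp H u), ← hH.eigenvectorBasis.repr.norm_map u,
    ← Real.norm_of_nonneg hm, ← norm_smul]
  refine EuclideanSpace.norm_le_norm_of_forall_norm_le fun i => ?_
  rw [eigenvectorBasis_repr_mApp, PiLp.smul_apply, norm_mul, norm_smul]
  gcongr
  rw [Real.norm_of_nonneg hm]
  exact h i

end Matrix.IsHermitian

theorem stmt8_general {d : ℕ} {Ω : Type*} [MeasurableSpace Ω] (μ : Measure Ω)
    (L ν : ℝ) (hL : 0 ≤ L) (hν : 0 < ν)
    (F : EuclideanSpace ℝ (Fin d) → ℝ) (hF : Differentiable ℝ F)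
    (hLip : ∀ x y, ‖gradient F x - gradient F y‖ ≤ L * ‖x - y‖)
    (x : EuclideanSpace ℝ (Fin d))
    (H : Matrix (Fin d) (Fin d) ℝ) (hH : H.IsHermitian)
    (lamMin lamMax : ℝ) (hlamMin : 0 < lamMin)
    (hMin : IsLeast (Set.range hH.eigenvalues) lamMin)
    (hMax : IsGreatest (Set.range hH.eigenvalues) lamMax)
    (hgrad : ‖gradient F x‖ > lamMax * L * ν * Real.sqrt d / (2 * lamMin))
    (G : Ω → EuclideanSpace ℝ (Fin d)) (hG : Integrable G μ)
    (hunbiased : ∫ ω, G ω ∂μ = fdGrad ν F x) :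
    0 < ∫ ω, ⟪mApp H (G ω), mApp H (gradient F x)⟫ ∂μ := by
  have heigMin (i : Fin d) : lamMin ≤ |hH.eigenvalues i| :=
    (hMin.2 (Set.mem_range_self i)).trans (le_abs_self _)
  have heigMax (i : Fin d) : |hH.eigenvalues i| ≤ lamMax := by
    rw [abs_of_pos (hlamMin.trans_le (hMin.2 (Set.mem_range_self i)))]
    exact hMax.2 (Set.mem_range_self i)
  have hlamMax_nonneg : 0 ≤ lamMax := hlamMin.le.trans (hMax.2 hMin.1)
  have hmean : ∫ ω, ⟪mApp H (G ω), mApp H (gradient F x)⟫ ∂μ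
      = ⟪mApp H (fdGrad ν F x), mApp H (gradient F x)⟫ := by
    simp_rw [real_inner_comm (mApp H (gradient F x))]
    rw [integral_inner ((mApp H).integrable_comp hG), (mApp H).integral_comp_comm hG, hunbiased]
  rw [hmean]
  refine real_inner_pos_of_norm_sub_lt_norm ?_
  rw [gt_iff_lt, div_lt_iff₀ (by positivity)] at hgrad
  calc ‖mApp H (fdGrad ν F x) - mApp H (gradient F x)‖
      = ‖mApp H (fdGrad ν F x - gradient F x)‖ := by rw [map_sub]
    _ ≤ lamMax * (L * ν * √d / 2) := (hH.norm_mApp_le hlamMax_nonneg heigMax _).trans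
        (by gcongr; exact norm_fdGrad_sub_gradient_le hL hν hF hLip x)
    _ < lamMin * ‖gradient F x‖ := by linarith
    _ ≤ ‖mApp H (gradient F x)‖ := hH.mul_norm_le_norm_mApp hlamMin.le heigMin _

theorem stmt8 {d : ℕ} {Ω : Type*} [MeasurableSpace Ω] (μ : Measure Ω) [IsProbabilityMeasure μ]
    (L ν : ℝ) (hL : 0 ≤ L) (hν : 0 < ν)
    (F : EuclideanSpace ℝ (Fin d) → ℝ) (hF : Differentiable ℝ F)
    (hLip : ∀ x y, ‖gradient F x - gradient F y‖ ≤ L * ‖x - y‖)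
    (x : EuclideanSpace ℝ (Fin d))
    (H : Matrix (Fin d) (Fin d) ℝ) (hH : H.IsHermitian) (hPD : H.PosDef)
    (lamMin lamMax : ℝ) (hlamMin : 0 < lamMin)
    (hMin : IsLeast (Set.range hH.eigenvalues) lamMin)
    (hMax : IsGreatest (Set.range hH.eigenvalues) lamMax)
    (hgrad : ‖gradient F x‖ > lamMax * L * ν * Real.sqrt d / (2 * lamMin))
    (G : Ω → EuclideanSpace ℝ (Fin d)) (hG : Integrable G μ)
    (hunbiased : ∫ ω, G ω ∂μ = fdGrad ν F x) :
    0 < ∫ ω, ⟪mApp H (G ω), mApp H (gradient F x)⟫ ∂μ :=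
  stmt8_general μ L ν hL hν F hF hLip x H hH lamMin lamMax hlamMin hMin hMax hgrad G hG hunbiased
end

section
/- Let f : ℝ^d → ℝ be differentiable with L-Lipschitz continuous gradient (L > 0), let f̂ : ℝ^d → ℝ satisfy |f̂(y) − f(y)| ≤ ε_m for all y (ε_m ≥ 0), let ν > 0, and let x ∈ ℝ^d. Then the forward finite-difference gradient estimate computed from the noisy function values satisfies ‖∇^FD f̂(x) − ∇f(x)‖ ≤ (Lν/2)·√d + (2·ε_m/ν)·√d. -/
open MeasureTheory
open scoped RealInnerProductSpace

/-
Coordinatewise, the error of the forward difference splits into the noise, at most `2 εm / ν`,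
and the first-order Taylor remainder of `f` along `ν eⱼ` divided by `ν`, at most `L ν / 2`.
The remainder bound `‖f (x + v) - f x - f' x v‖ ≤ L / 2 ‖v‖²` follows by comparing
`t ↦ f (x + t v) - f x - t f' x v` with `t ↦ L t² ‖v‖² / 2` on `[0, 1]`: the derivative of the
first is `(f' (x + t v) - f' x) v`, of norm at most `L t ‖v‖²`. Summing the squares of the `d`
coordinate errors gives the factor `√d`.
-/

section Descent

variable {E F : Type*} [NormedAddCommGroup E] [NormedSpace ℝ E]
  [NormedAddCommGroup F] [NormedSpace ℝ F] {f : E → F} {f' : E → E →L[ℝ] F} {L : ℝ}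

theorem norm_image_add_sub_sub_fderiv_le (hf : ∀ y, HasFDerivAt f (f' y) y)
    (hLip : ∀ y z, ‖f' y - f' z‖ ≤ L * ‖y - z‖) (x v : E) :
    ‖f (x + v) - f x - f' x v‖ ≤ L / 2 * ‖v‖ ^ 2 := by
  have hφ : ∀ t : ℝ, HasDerivAt (fun t : ℝ => f (x + t • v) - f x - t • f' x v)
      (f' (x + t • v) v - f' x v) t := fun t => by
    have hpath : HasDerivAt (fun s : ℝ => x + s • v) v t := by
      simpa using ((hasDerivAt_id t).smul_const v).const_add x
    simpa using (((hf _).comp_hasDerivAt t hpath).sub_const (f x)).fun_sub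
      ((hasDerivAt_id t).smul_const (f' x v))
  have hB : ∀ t : ℝ, HasDerivAt (fun t : ℝ => L / 2 * ‖v‖ ^ 2 * t ^ 2) (L * ‖v‖ ^ 2 * t) t :=
    fun t => ((hasDerivAt_pow 2 t).const_mul (L / 2 * ‖v‖ ^ 2)).congr_deriv (by ring)
  have hbound : ∀ t ∈ Set.Ico (0 : ℝ) 1, ‖f' (x + t • v) v - f' x v‖ ≤ L * ‖v‖ ^ 2 * t := by
    rintro t ⟨ht, -⟩
    calc ‖f' (x + t • v) v - f' x v‖ = ‖(f' (x + t • v) - f' x) v‖ := rfl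
      _ ≤ ‖f' (x + t • v) - f' x‖ * ‖v‖ := ContinuousLinearMap.le_opNorm _ _
      _ ≤ L * ‖(x + t • v) - x‖ * ‖v‖ := by gcongr; exact hLip _ _
      _ = L * ‖v‖ ^ 2 * t := by
        rw [add_sub_cancel_left, norm_smul, Real.norm_of_nonneg ht]; ring
  simpa using image_norm_le_of_norm_deriv_right_le_deriv_boundary
    (fun t _ => (hφ t).continuousAt.continuousWithinAt)
    (fun t _ => (hφ t).hasDerivWithinAt) (by simp) hB hbound (Set.right_mem_Icc.2 zero_le_one)

end Descent

theorem abs_forwardDiff_div_sub_fderiv_le {E : Type*} [NormedAddCommGroup E] [NormedSpace ℝ E]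
    {f g : E → ℝ} {f' : E → E →L[ℝ] ℝ} {L ε ν : ℝ} (hf : ∀ y, HasFDerivAt f (f' y) y)
    (hLip : ∀ y z, ‖f' y - f' z‖ ≤ L * ‖y - z‖) (hg : ∀ y, |g y - f y| ≤ ε) (hν : 0 < ν)
    (x v : E) :
    |(g (x + ν • v) - g x) / ν - f' x v| ≤ L * ν / 2 * ‖v‖ ^ 2 + 2 * ε / ν := by
  have htaylor : |f (x + ν • v) - f x - ν * f' x v| ≤ L / 2 * ν ^ 2 * ‖v‖ ^ 2 := by
    simpa [norm_smul, abs_of_pos hν, mul_pow, mul_assoc] using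
      norm_image_add_sub_sub_fderiv_le hf hLip x (ν • v)
  have hsplit : (g (x + ν • v) - g x) / ν - f' x v =
      ((g (x + ν • v) - f (x + ν • v)) - (g x - f x) + (f (x + ν • v) - f x - ν * f' x v)) / ν := by
    field_simp
    ring
  rw [hsplit, abs_div, abs_of_pos hν, div_le_iff₀ hν]
  calc _ ≤ |g (x + ν • v) - f (x + ν • v)| + |g x - f x| + |f (x + ν • v) - f x - ν * f' x v| :=
        (abs_add_le _ _).trans (add_le_add_left (abs_sub _ _) _)
    _ ≤ ε + ε + L / 2 * ν ^ 2 * ‖v‖ ^ 2 := by gcongr <;> apply_assumption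
    _ = (L * ν / 2 * ‖v‖ ^ 2 + 2 * ε / ν) * ν := by field_simp; ring

theorem EuclideanSpace.norm_le_sqrt_card_mul {ι : Type*} [Fintype ι] {c : ℝ}
    (w : EuclideanSpace ℝ ι) (hw : ∀ i, |w i| ≤ c) : ‖w‖ ≤ √(Fintype.card ι) * c := by
  cases isEmpty_or_nonempty ι with
  | inl hι => simp [Subsingleton.elim w 0]
  | inr hι =>
    have hc : 0 ≤ c := (abs_nonneg _).trans (hw (Classical.arbitrary ι))
    rw [EuclideanSpace.norm_eq, ← Real.sqrt_sq hc, ← Real.sqrt_mul (Nat.cast_nonneg _)]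
    gcongr
    calc ∑ i, ‖w i‖ ^ 2 ≤ ∑ _i : ι, c ^ 2 := by
          gcongr with i; rw [Real.norm_eq_abs]; exact hw i
      _ = Fintype.card ι * c ^ 2 := by simp

theorem norm_fderiv_sub_fderiv {𝕜 F : Type*} [RCLike 𝕜] [NormedAddCommGroup F]
    [InnerProductSpace 𝕜 F] [CompleteSpace F] (f : F → 𝕜) (x y : F) :
    ‖fderiv 𝕜 f x - fderiv 𝕜 f y‖ = ‖gradient f x - gradient f y‖ := by
  rw [← toDual_gradient, ← toDual_gradient, ← map_sub, LinearIsometryEquiv.norm_map]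

theorem fdGrad_apply {d : ℕ} (ν : ℝ) (g : EuclideanSpace ℝ (Fin d) → ℝ)
    (x : EuclideanSpace ℝ (Fin d)) (j : Fin d) :
    fdGrad ν g x j = (g (x + ν • EuclideanSpace.single j 1) - g x) / ν := rfl

theorem stmt10_general {d : ℕ} (L εm ν : ℝ) (hν : 0 < ν)
    (f : EuclideanSpace ℝ (Fin d) → ℝ) (hf : Differentiable ℝ f)
    (hLip : ∀ x y, ‖gradient f x - gradient f y‖ ≤ L * ‖x - y‖)
    (fh : EuclideanSpace ℝ (Fin d) → ℝ) (hnoise : ∀ y, |fh y - f y| ≤ εm)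
    (x : EuclideanSpace ℝ (Fin d)) :
    ‖fdGrad ν fh x - gradient f x‖
      ≤ (L * ν / 2) * Real.sqrt d + (2 * εm / ν) * Real.sqrt d := by
  have hcoord (j : Fin d) : |(fdGrad ν fh x - gradient f x) j| ≤ L * ν / 2 + 2 * εm / ν := by
    have := abs_forwardDiff_div_sub_fderiv_le (fun y => (hf y).hasFDerivAt)
      (fun y z => (norm_fderiv_sub_fderiv f y z).trans_le (hLip y z)) hnoise hν x
      (EuclideanSpace.single j 1)
    rwa [← inner_gradient_left, EuclideanSpace.inner_single_right, one_mul, conj_trivial,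
      PiLp.norm_single, norm_one, one_pow, mul_one, ← fdGrad_apply, ← PiLp.sub_apply] at this
  calc _ ≤ √(Fintype.card (Fin d)) * (L * ν / 2 + 2 * εm / ν) :=
        EuclideanSpace.norm_le_sqrt_card_mul _ hcoord
    _ = _ := by rw [Fintype.card_fin]; ring

theorem stmt10 {d : ℕ} (L εm ν : ℝ) (hL : 0 < L) (hε : 0 ≤ εm) (hν : 0 < ν)
    (f : EuclideanSpace ℝ (Fin d) → ℝ) (hf : Differentiable ℝ f)
    (hLip : ∀ x y, ‖gradient f x - gradient f y‖ ≤ L * ‖x - y‖)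
    (fh : EuclideanSpace ℝ (Fin d) → ℝ) (hnoise : ∀ y, |fh y - f y| ≤ εm)
    (x : EuclideanSpace ℝ (Fin d)) :
    ‖fdGrad ν fh x - gradient f x‖
      ≤ (L * ν / 2) * Real.sqrt d + (2 * εm / ν) * Real.sqrt d :=
  stmt10_general L εm ν hν f hf hLip fh hnoise x
end
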